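/- arXiv:1604.00663 — 2 statements merged into one kernel-verified Lean document; each statement's English description precedes it below -/
import Mathlib

section
/- For every n ≥ 1, the variance of the Gepner statistic over all permutations of {1,…,n} equals n²(n−1)(n−2)/72; that is, (1/n!) Σ_{π ∈ S_n} (gep(π) − n(n−1)(n−2)/12)² = n²(n−1)(n−2)/72 (as an identity in ℚ). -/
/-- The Gepner statistic of a word `w = w 0 … w (m-1)` over a totally ordered
alphabet: the number of triples of positions `i < j < k` such that
`w_i w_j w_k` reduces to one of the odd permutations `132`, `213`, `321`. -/
def gep {m : ℕ} {α : Type*} [LinearOrder α] (w : Fin m → α) : ℕ :=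
  (Finset.univ.filter (fun t : Fin m × Fin m × Fin m =>
    t.1 < t.2.1 ∧ t.2.1 < t.2.2 ∧
      ((w t.1 < w t.2.2 ∧ w t.2.2 < w t.2.1) ∨
       (w t.2.1 < w t.1 ∧ w t.1 < w t.2.2) ∨
       (w t.2.2 < w t.2.1 ∧ w t.2.1 < w t.1)))).card

/-!
For positions `t = (i < j < k)` let `s_t(π) = ±1` be the sign of the pattern of `π` at `t`, which
is `-1` exactly for the Gepner patterns. Then `gep π = (C(n,3) - ∑_t s_t(π)) / 2`, so
`4 n! · Var = ∑_{t,u} ∑_π s_t(π) s_u(π)`. The inner sum vanishes when `u` has two positions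
outside `t`: composing `π` with the transposition of these positions fixes `s_t` and flips `s_u`.
Otherwise `t ∪ u` has `m = 3` or `4` elements, and since the pattern of `π` on `m` fixed positions
is uniformly distributed on `S_m`, each of the `C(n,m)` sets of positions contributes `n!/m!` times
a constant computed in `S_m`, namely `6` for `m = 3` and `32` for `m = 4`. Hence
`Var = (C(n,3) + 4/3 · C(n,4)) / 4 = n²(n-1)(n-2)/72`.
-/

open Finset Equiv Function
open scoped Nat

theorem exists_perm_lt_iff_lt {β : Type*} [LinearOrder β] {k : ℕ} {v : Fin k → β}
    (hv : Injective v) : ∃ σ : Perm (Fin k), ∀ x y, σ x < σ y ↔ v x < v y := by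
  have hmono : StrictMono (v ∘ Tuple.sort v) :=
    (Tuple.monotone_sort v).strictMono_of_injective (hv.comp (Tuple.sort v).injective)
  refine ⟨(Tuple.sort v).symm, fun x y => ?_⟩
  rw [← hmono.lt_iff_lt]
  simp

/-- The pattern of a uniformly random `π ∈ S_n` at `k` fixed positions is uniform on `S_k`. -/
theorem factorial_smul_sum_perm_comp {M : Type*} [AddCommMonoid M] {k n : ℕ}
    {e : Fin k → Fin n} (he : Injective e) (F : (Fin k → Fin n) → M) (G : Perm (Fin k) → M)
    (hFG : ∀ σ v, (∀ x y, σ x < σ y ↔ v x < v y) → F v = G σ) :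
    k ! • ∑ π : Perm (Fin n), F (π ∘ e) = n ! • ∑ σ : Perm (Fin k), G σ := by
  have hshift (τ : Perm (Fin k)) :
      ∑ π : Perm (Fin n), F (π ∘ e ∘ τ) = ∑ π : Perm (Fin n), F (π ∘ e) := by
    refine Fintype.sum_equiv (Equiv.mulRight (τ.viaFintypeEmbedding ⟨e, he⟩)) _ _ fun π => ?_
    congr 1
    funext x
    simp only [comp_apply, coe_mulRight, Perm.coe_mul]
    exact congrArg π (Perm.viaFintypeEmbedding_apply_image τ ⟨e, he⟩ x).symm
  have hpattern (π : Perm (Fin n)) :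
      ∑ τ : Perm (Fin k), F (π ∘ e ∘ τ) = ∑ σ : Perm (Fin k), G σ := by
    obtain ⟨σ, hσ⟩ := exists_perm_lt_iff_lt (π.injective.comp he)
    exact Fintype.sum_equiv (Equiv.mulLeft σ) _ _ fun τ => hFG _ _ fun x y => hσ (τ x) (τ y)
  calc k ! • ∑ π : Perm (Fin n), F (π ∘ e)
      = ∑ τ : Perm (Fin k), ∑ π : Perm (Fin n), F (π ∘ e ∘ τ) := by
        simp [hshift, Fintype.card_perm]
    _ = ∑ π : Perm (Fin n), ∑ τ : Perm (Fin k), F (π ∘ e ∘ τ) := sum_comm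
    _ = n ! • ∑ σ : Perm (Fin k), G σ := by
        simp [hpattern, Fintype.card_perm]

section GepnerSign
variable {β γ : Type*} [LinearOrder β] [LinearOrder γ]

def IsGepPattern (v : Fin 3 → β) : Prop :=
  (v 0 < v 2 ∧ v 2 < v 1) ∨ (v 1 < v 0 ∧ v 0 < v 2) ∨ (v 2 < v 1 ∧ v 1 < v 0)

instance (v : Fin 3 → β) : Decidable (IsGepPattern v) := by
  unfold IsGepPattern; infer_instance

/-- For injective `v` this is the sign of the permutation order-isomorphic to `v`, since
`132`, `213`, `321` are the odd elements of `S₃`. -/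
def gepSign (v : Fin 3 → β) : ℤ := if IsGepPattern v then -1 else 1

lemma gepSign_congr {v : Fin 3 → β} {w : Fin 3 → γ} (h : ∀ x y, v x < v y ↔ w x < w y) :
    gepSign v = gepSign w := by
  simp only [gepSign, IsGepPattern, h]

lemma gepSign_comp_swap {v : Fin 3 → β} (hv : Injective v) {i j : Fin 3} (hij : i ≠ j) :
    gepSign (v ∘ swap i j) = -gepSign v := by
  obtain ⟨σ, hσ⟩ := exists_perm_lt_iff_lt hv
  have hS₃ : ∀ σ : Perm (Fin 3), ∀ i j, i ≠ j → gepSign (σ ∘ swap i j) = -gepSign σ := by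
    decide
  rw [gepSign_congr (w := σ) fun x y => (hσ x y).symm,
    gepSign_congr (v := v ∘ swap i j) (w := σ ∘ swap i j) fun x y => (hσ _ _).symm]
  exact hS₃ σ i j hij

end GepnerSign

section IncTuples
variable {k m n : ℕ}

def incTuples (k n : ℕ) : Finset (Fin k → Fin n) := {t | StrictMono t}

lemma mem_incTuples {t : Fin k → Fin n} : t ∈ incTuples k n ↔ StrictMono t := by
  simp [incTuples]

lemma eq_of_image_univ_eq {t u : Fin k → Fin n} (ht : StrictMono t) (hu : StrictMono u)
    (h : univ.image t = univ.image u) : t = u := by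
  rw [← ht.range_inj hu]
  simpa using congrArg ((↑) : Finset (Fin n) → Set (Fin n)) h

lemma card_incTuples (k n : ℕ) : #(incTuples k n) = n.choose k := by
  rw [← (by simp : #(powersetCard k (univ : Finset (Fin n))) = n.choose k)]
  refine card_bij (fun t _ => univ.image t) (fun t ht => ?_)
    (fun t ht u hu htu => eq_of_image_univ_eq (mem_incTuples.1 ht) (mem_incTuples.1 hu) htu)
    (fun s hs => ?_)
  · rw [mem_incTuples] at ht
    simp [mem_powersetCard, card_image_of_injective _ ht.injective]
  · rw [mem_powersetCard] at hs
    exact ⟨s.orderEmbOfFin hs.2, mem_incTuples.2 (s.orderEmbOfFin hs.2).strictMono,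
      image_orderEmbOfFin_univ s hs.2⟩

lemma exists_strictMono_comp_eq {t : Fin k → Fin n} {h : Fin m → Fin n} (ht : StrictMono t)
    (hh : StrictMono h) (hth : univ.image t ⊆ univ.image h) :
    ∃ A : Fin k → Fin m, StrictMono A ∧ h ∘ A = t := by
  obtain ⟨A, rfl⟩ := Set.range_subset_range_iff_exists_comp.1 (by simpa using coe_subset.2 hth)
  exact ⟨A, fun x y hxy => hh.lt_iff_lt.1 (ht hxy), rfl⟩

lemma image_comp_union_image_comp (h : Fin m → Fin n) (A B : Fin k → Fin m) :
    univ.image (h ∘ A) ∪ univ.image (h ∘ B) = (univ.image A ∪ univ.image B).image h := by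
  rw [image_union, image_image, image_image]

def coverPairs (k m : ℕ) : Finset ((Fin k → Fin m) × (Fin k → Fin m)) :=
  {q ∈ incTuples k m ×ˢ incTuples k m | univ.image q.1 ∪ univ.image q.2 = univ}

lemma sum_filter_card_union_eq {M : Type*} [AddCommMonoid M]
    (F : (Fin k → Fin n) × (Fin k → Fin n) → M) :
    ∑ p ∈ incTuples k n ×ˢ incTuples k n with #(univ.image p.1 ∪ univ.image p.2) = m, F p =
      ∑ h ∈ incTuples m n, ∑ q ∈ coverPairs k m, F (h ∘ q.1, h ∘ q.2) := by
  rw [← sum_product']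
  symm
  refine sum_bij (fun x _ => (x.1 ∘ x.2.1, x.1 ∘ x.2.2)) ?_ ?_ ?_ fun _ _ => rfl
  · rintro ⟨h, A, B⟩ hx
    simp only [mem_product, coverPairs, mem_filter, mem_incTuples] at hx
    obtain ⟨hh, ⟨hA, hB⟩, hAB⟩ := hx
    simp only [mem_filter, mem_product, mem_incTuples]
    refine ⟨⟨hh.comp hA, hh.comp hB⟩, ?_⟩
    rw [image_comp_union_image_comp, hAB, card_image_of_injective _ hh.injective, card_fin]
  · rintro ⟨h, A, B⟩ hx ⟨h', A', B'⟩ hx' heq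
    simp only [mem_product, coverPairs, mem_filter, mem_incTuples] at hx hx'
    simp only [Prod.mk.injEq] at heq ⊢
    have himage : univ.image h = univ.image h' :=
      calc univ.image h = univ.image (h ∘ A) ∪ univ.image (h ∘ B) := by
            rw [image_comp_union_image_comp, hx.2.2]
        _ = univ.image h' := by
            rw [heq.1, heq.2, image_comp_union_image_comp, hx'.2.2]
    obtain rfl := eq_of_image_univ_eq hx.1 hx'.1 himage
    exact ⟨rfl, hx.1.injective.comp_left heq.1, hx.1.injective.comp_left heq.2⟩
  · rintro ⟨t, u⟩ hp
    simp only [mem_filter, mem_product, mem_incTuples] at hp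
    obtain ⟨⟨ht, hu⟩, hcard⟩ := hp
    set g := (univ.image t ∪ univ.image u).orderEmbOfFin hcard
    have hg : univ.image g = univ.image t ∪ univ.image u := image_orderEmbOfFin_univ _ hcard
    obtain ⟨A, hA, hgA⟩ := exists_strictMono_comp_eq ht g.strictMono (hg ▸ subset_union_left)
    obtain ⟨B, hB, hgB⟩ := exists_strictMono_comp_eq hu g.strictMono (hg ▸ subset_union_right)
    refine ⟨(g, A, B), ?_, by rw [hgA, hgB]⟩
    simp only [mem_product, coverPairs, mem_filter, mem_incTuples]
    refine ⟨g.strictMono, ⟨hA, hB⟩, image_injective g.injective ?_⟩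
    rw [← image_comp_union_image_comp, hgA, hgB, ← hg]

end IncTuples

section GepAsSum
variable {β : Type*} [LinearOrder β]

lemma gep_eq_card_filter {m : ℕ} (w : Fin m → β) :
    gep w = #{t ∈ incTuples 3 m | IsGepPattern (w ∘ t)} := by
  refine card_nbij' (fun t => ![t.1, t.2.1, t.2.2]) (fun f => (f 0, f 1, f 2)) ?_ ?_ ?_ ?_
  · intro t ht
    rw [mem_coe, mem_filter] at ht ⊢
    simpa [mem_incTuples, Fin.strictMono_iff_lt_succ, Fin.forall_fin_succ, IsGepPattern,
      and_assoc] using ht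
  · intro t ht
    rw [mem_coe, mem_filter] at ht ⊢
    simpa [mem_incTuples, Fin.strictMono_iff_lt_succ, Fin.forall_fin_succ, IsGepPattern,
      and_assoc] using ht
  · intro t _; rfl
  · intro f _; funext i; fin_cases i <;> rfl

lemma two_mul_gep {m : ℕ} (w : Fin m → β) :
    2 * (gep w : ℤ) = m.choose 3 - ∑ t ∈ incTuples 3 m, gepSign (w ∘ t) := by
  rw [gep_eq_card_filter, ← card_incTuples, card_filter, Nat.cast_sum, Finset.mul_sum,
    card_eq_sum_ones, Nat.cast_sum, ← Finset.sum_sub_distrib]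
  refine sum_congr rfl fun t _ => ?_
  unfold gepSign; split_ifs <;> simp

end GepAsSum

section Correlation
variable {m n : ℕ}

def gepCorr (t u : Fin 3 → Fin n) : ℤ :=
  ∑ π : Perm (Fin n), gepSign (π ∘ t) * gepSign (π ∘ u)

lemma sum_sq_sum_gepSign (T : Finset (Fin 3 → Fin n)) :
    ∑ π : Perm (Fin n), (∑ t ∈ T, gepSign (π ∘ t)) ^ 2 = ∑ p ∈ T ×ˢ T, gepCorr p.1 p.2 :=
  calc ∑ π : Perm (Fin n), (∑ t ∈ T, gepSign (π ∘ t)) ^ 2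
      = ∑ π : Perm (Fin n), ∑ p ∈ T ×ˢ T, gepSign (π ∘ p.1) * gepSign (π ∘ p.2) := by
        simp only [sq, sum_mul_sum, ← sum_product']
    _ = ∑ p ∈ T ×ˢ T, gepCorr p.1 p.2 := sum_comm

lemma gepCorr_eq_zero {t u : Fin 3 → Fin n} (hu : Injective u) {i j : Fin 3} (hij : i ≠ j)
    (hi : u i ∉ univ.image t) (hj : u j ∉ univ.image t) : gepCorr t u = 0 := by
  have hfix : swap (u i) (u j) ∘ t = t := by
    funext x
    refine swap_apply_of_ne_of_ne ?_ ?_ <;> grind [mem_image_of_mem]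
  have hflip (π : Perm (Fin n)) :
      gepSign ((π * swap (u i) (u j)) ∘ t) * gepSign ((π * swap (u i) (u j)) ∘ u) =
        -(gepSign (π ∘ t) * gepSign (π ∘ u)) := by
    rw [Perm.coe_mul, comp_assoc, hfix, comp_assoc, hu.swap_comp,
      ← comp_assoc, gepSign_comp_swap (π.injective.comp hu) hij, mul_neg]
  have h := Fintype.sum_equiv (Equiv.mulRight (swap (u i) (u j)))
    (fun π => -(gepSign (π ∘ t) * gepSign (π ∘ u))) (fun π => gepSign (π ∘ t) * gepSign (π ∘ u))
    fun π => (hflip π).symm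
  rw [sum_neg_distrib] at h
  unfold gepCorr
  omega

lemma factorial_mul_gepCorr_comp {h : Fin m → Fin n} (hh : Injective h) (A B : Fin 3 → Fin m) :
    m ! * gepCorr (h ∘ A) (h ∘ B) = n ! * gepCorr A B := by
  unfold gepCorr
  have := factorial_smul_sum_perm_comp hh
    (fun v => gepSign (v ∘ A) * gepSign (v ∘ B)) (fun σ => gepSign (σ ∘ A) * gepSign (σ ∘ B))
    fun σ v hσv => by
      rw [gepSign_congr (v := v ∘ A) (w := σ ∘ A) fun x y => (hσv _ _).symm,
        gepSign_congr (v := v ∘ B) (w := σ ∘ B) fun x y => (hσv _ _).symm]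
  rw [nsmul_eq_mul, nsmul_eq_mul] at this
  exact this

def coverCorr (m : ℕ) : ℤ := ∑ q ∈ coverPairs 3 m, gepCorr q.1 q.2

lemma factorial_mul_sum_gepCorr_card_union (m n : ℕ) :
    m ! * ∑ p ∈ incTuples 3 n ×ˢ incTuples 3 n with #(univ.image p.1 ∪ univ.image p.2) = m,
      gepCorr p.1 p.2 = n.choose m * n ! * coverCorr m := by
  rw [sum_filter_card_union_eq, mul_sum, ← card_incTuples, mul_assoc, ← nsmul_eq_mul,
    ← sum_const]
  refine sum_congr rfl fun h hh => ?_
  rw [coverCorr, mul_sum, mul_sum]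
  exact sum_congr rfl fun q _ => factorial_mul_gepCorr_comp (mem_incTuples.1 hh).injective _ _

lemma coverCorr_three : coverCorr 3 = 6 := by decide

lemma coverCorr_four : coverCorr 4 = 32 := by decide

lemma coverCorr_eq_zero (hm : 5 ≤ m) : coverCorr m = 0 := by
  refine sum_eq_zero fun q hq => ?_
  simp only [coverPairs, mem_filter, mem_product, mem_incTuples] at hq
  obtain ⟨⟨hA, hB⟩, hcover⟩ := hq
  have hcard : 2 ≤ #(univ.image q.2 \ univ.image q.1) := by
    have h := card_sdiff_add_card (univ.image q.2) (univ.image q.1)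
    rw [union_comm, hcover, Finset.card_univ, Fintype.card_fin] at h
    have : #(univ.image q.1) ≤ 3 := card_image_le.trans (by simp)
    omega
  obtain ⟨a, ha, b, hb, hab⟩ := one_lt_card.1 hcard
  simp only [mem_sdiff, mem_image, mem_univ, true_and] at ha hb
  obtain ⟨⟨i, rfl⟩, hai⟩ := ha
  obtain ⟨⟨j, rfl⟩, hbj⟩ := hb
  exact gepCorr_eq_zero hB.injective (fun hij => hab (congrArg q.2 hij))
    (by simpa using hai) (by simpa using hbj)

lemma sum_gepCorr (n : ℕ) :
    (∑ p ∈ incTuples 3 n ×ˢ incTuples 3 n, gepCorr p.1 p.2 : ℚ) =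
      n ! * (n.choose 3 + 4 / 3 * n.choose 4) := by
  have hmaps : ∀ p ∈ incTuples 3 n ×ˢ incTuples 3 n,
      #(univ.image p.1 ∪ univ.image p.2) ∈ Icc 3 6 := by
    intro p hp
    simp only [mem_product, mem_incTuples] at hp
    have h1 := card_image_of_injective univ hp.1.injective
    have h2 := card_image_of_injective univ hp.2.injective
    simp only [Finset.card_univ, Fintype.card_fin] at h1 h2
    have := card_union_le (univ.image p.1) (univ.image p.2)
    have := card_le_card (subset_union_left (s₁ := univ.image p.1) (s₂ := univ.image p.2))
    simp only [mem_Icc]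
    omega
  have hfibre (m : ℕ) :
      (∑ p ∈ incTuples 3 n ×ˢ incTuples 3 n with #(univ.image p.1 ∪ univ.image p.2) = m,
        gepCorr p.1 p.2 : ℚ) = n.choose m * n ! * coverCorr m / m ! := by
    rw [eq_div_iff (by positivity), mul_comm]
    exact_mod_cast factorial_mul_sum_gepCorr_card_union m n
  rw [← sum_fiberwise_of_maps_to hmaps]
  simp only [hfibre]
  rw [show Icc 3 6 = {3, 4, 5, 6} from rfl]
  simp [coverCorr_three, coverCorr_four, coverCorr_eq_zero, Nat.factorial]
  ring

end Correlation

lemma cast_choose_three (n : ℕ) : (n.choose 3 : ℚ) = n * (n - 1) * (n - 2) / 6 := by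
  rw [Nat.cast_choose_eq_descPochhammer_div]; simp [descPochhammer_succ_right]; ring

lemma cast_choose_four (n : ℕ) :
    (n.choose 4 : ℚ) = n * (n - 1) * (n - 2) * (n - 3) / 24 := by
  rw [Nat.cast_choose_eq_descPochhammer_div]; simp [descPochhammer_succ_right]; ring

theorem gep_perm_variance_general (n : ℕ) :
    (∑ π : Equiv.Perm (Fin n),
        ((gep (fun i => π i) : ℚ) - (n : ℚ) * ((n : ℚ) - 1) * ((n : ℚ) - 2) / 12) ^ 2)
      / (n.factorial : ℚ) =
      (n : ℚ) ^ 2 * ((n : ℚ) - 1) * ((n : ℚ) - 2) / 72 := by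
  have hcentre (π : Perm (Fin n)) :
      (gep (fun i => π i) : ℚ) - n * (n - 1) * (n - 2) / 12 =
        -((∑ t ∈ incTuples 3 n, gepSign (π ∘ t) : ℤ) : ℚ) / 2 := by
    have h : (2 * gep (fun i => π i) : ℚ) =
        n.choose 3 - (∑ t ∈ incTuples 3 n, gepSign (π ∘ t) : ℤ) := by
      exact_mod_cast two_mul_gep (fun i => π i)
    rw [cast_choose_three] at h
    linarith
  have hsum : ∑ π : Perm (Fin n), (-((∑ t ∈ incTuples 3 n, gepSign (π ∘ t) : ℤ) : ℚ) / 2) ^ 2 =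
      (∑ p ∈ incTuples 3 n ×ˢ incTuples 3 n, gepCorr p.1 p.2 : ℚ) / 4 := by
    rw [← Int.cast_sum, ← sum_sq_sum_gepSign, Int.cast_sum, sum_div]
    push_cast
    ring_nf
  simp only [hcentre, hsum, sum_gepCorr, cast_choose_three, cast_choose_four]
  field_simp
  ring

theorem gep_perm_variance (n : ℕ) (hn : 1 ≤ n) :
    (∑ π : Equiv.Perm (Fin n),
        ((gep (fun i => π i) : ℚ) - (n : ℚ) * ((n : ℚ) - 1) * ((n : ℚ) - 2) / 12) ^ 2)
      / (n.factorial : ℚ) =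
      (n : ℚ) ^ 2 * ((n : ℚ) - 1) * ((n : ℚ) - 2) / 72 :=
  gep_perm_variance_general n
end

section
/- For every n ≥ 1, the third central moment of the Gepner statistic over all permutations of {1,…,n} vanishes: Σ_{π ∈ S_n} (gep(π) − n(n−1)(n−2)/12)³ = 0 (as an identity in ℚ). -/
theorem gep_cardT (n : ℕ) :
    ((Finset.univ.filter (fun t : Fin n × Fin n × Fin n => t.1 < t.2.1 ∧ t.2.1 < t.2.2)).card)
    = n.choose 3 := by
  have h : ((Finset.univ.filter (fun t : Fin n × Fin n × Fin n => t.1 < t.2.1 ∧ t.2.1 < t.2.2)).card)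
      = (Finset.powersetCard 3 (Finset.univ : Finset (Fin n))).card := by
    apply Finset.card_bij (fun t _ => ({t.1, t.2.1, t.2.2} : Finset (Fin n)))
    · rintro ⟨a, b, c⟩ ht
      simp only [Finset.mem_filter] at ht
      obtain ⟨-, h1, h2⟩ := ht
      simp only [Finset.mem_powersetCard_univ]
      rw [Finset.card_insert_of_notMem (by
            simp only [Finset.mem_insert, Finset.mem_singleton]
            push_neg
            exact ⟨ne_of_lt h1, ne_of_lt (h1.trans h2)⟩),
          Finset.card_insert_of_notMem (by
            simp only [Finset.mem_singleton]; exact ne_of_lt h2),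
          Finset.card_singleton]
    · rintro ⟨a, b, c⟩ ht ⟨d, e, f⟩ ht' hset
      simp only [Finset.mem_filter] at ht ht'
      obtain ⟨-, h1, h2⟩ := ht
      obtain ⟨-, h3, h4⟩ := ht'
      have hmem : ∀ x : Fin n, (x = a ∨ x = b ∨ x = c) ↔ (x = d ∨ x = e ∨ x = f) := by
        intro x
        have := Finset.ext_iff.mp hset x
        simpa using this
      have h5 := (hmem a).mp (Or.inl rfl)
      have h6 := (hmem b).mp (Or.inr (Or.inl rfl))
      have h7 := (hmem c).mp (Or.inr (Or.inr rfl))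
      simp only [Fin.ext_iff] at h5 h6 h7
      simp only [Fin.lt_iff_val_lt_val] at h1 h2 h3 h4
      have hq : a = d ∧ b = e ∧ c = f := by
        rcases h5 with h5|h5|h5 <;> rcases h6 with h6|h6|h6 <;> rcases h7 with h7|h7|h7 <;>
          exact ⟨Fin.ext (by omega), Fin.ext (by omega), Fin.ext (by omega)⟩
      obtain ⟨rfl, rfl, rfl⟩ := hq
      rfl
    · intro s hs
      rw [Finset.mem_powersetCard_univ] at hs
      set e := s.orderIsoOfFin hs with he
      have m01 : (e 0 : Fin n) < e 1 := e.strictMono (by decide)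
      have m12 : (e 1 : Fin n) < e 2 := e.strictMono (by decide)
      refine ⟨((e 0 : Fin n), (e 1 : Fin n), (e 2 : Fin n)), ?_, ?_⟩
      · simp only [Finset.mem_filter, Finset.mem_univ, true_and]
        exact ⟨m01, m12⟩
      · apply Finset.eq_of_subset_of_card_le
        · intro x hx
          simp only [Finset.mem_insert, Finset.mem_singleton] at hx
          rcases hx with h|h|h <;> subst h <;> exact (e _).2
        · rw [hs]
          rw [Finset.card_insert_of_notMem (by
              simp only [Finset.mem_insert, Finset.mem_singleton]
              push_neg
              exact ⟨ne_of_lt m01, ne_of_lt (m01.trans m12)⟩),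
            Finset.card_insert_of_notMem (by
              simp only [Finset.mem_singleton]; exact ne_of_lt m12),
            Finset.card_singleton]
  rw [h, Finset.card_powersetCard, Finset.card_fin]

theorem gep_rev_add (n : ℕ) (π : Equiv.Perm (Fin n)) :
    gep (fun i => Fin.rev (π i)) + gep (fun i => π i) = n.choose 3 := by
  classical
  rw [← gep_cardT n]
  unfold gep
  have hrw : ∀ (C : Fin n × Fin n × Fin n → Prop) [DecidablePred C],
      Finset.univ.filter (fun t : Fin n × Fin n × Fin n =>
          t.1 < t.2.1 ∧ t.2.1 < t.2.2 ∧ C t)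
        = (Finset.univ.filter
            (fun t : Fin n × Fin n × Fin n => t.1 < t.2.1 ∧ t.2.1 < t.2.2)).filter C := by
    intro C _
    rw [Finset.filter_filter]
    exact Finset.filter_congr (by intro t _; tauto)
  rw [hrw, hrw]
  rw [show (Finset.univ.filter
      (fun t : Fin n × Fin n × Fin n => t.1 < t.2.1 ∧ t.2.1 < t.2.2)).filter
        (fun t => (Fin.rev (π t.1) < Fin.rev (π t.2.2) ∧ Fin.rev (π t.2.2) < Fin.rev (π t.2.1)) ∨
          (Fin.rev (π t.2.1) < Fin.rev (π t.1) ∧ Fin.rev (π t.1) < Fin.rev (π t.2.2)) ∨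
          (Fin.rev (π t.2.2) < Fin.rev (π t.2.1) ∧ Fin.rev (π t.2.1) < Fin.rev (π t.1)))
      = (Finset.univ.filter
          (fun t : Fin n × Fin n × Fin n => t.1 < t.2.1 ∧ t.2.1 < t.2.2)).filter
        (fun t => ¬((π t.1 < π t.2.2 ∧ π t.2.2 < π t.2.1) ∨
          (π t.2.1 < π t.1 ∧ π t.1 < π t.2.2) ∨
          (π t.2.2 < π t.2.1 ∧ π t.2.1 < π t.1))) from ?_]
  · rw [add_comm]
    exact Finset.card_filter_add_card_filter_not
      (fun t : Fin n × Fin n × Fin n => (π t.1 < π t.2.2 ∧ π t.2.2 < π t.2.1) ∨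
        (π t.2.1 < π t.1 ∧ π t.1 < π t.2.2) ∨
        (π t.2.2 < π t.2.1 ∧ π t.2.1 < π t.1))
  · apply Finset.filter_congr
    rintro ⟨a, b, c⟩ ht
    simp only [Finset.mem_filter, Finset.mem_univ, true_and] at ht
    obtain ⟨h1, h2⟩ := ht
    have hab : π a ≠ π b := π.injective.ne (ne_of_lt h1)
    have hbc : π b ≠ π c := π.injective.ne (ne_of_lt h2)
    have hac : π a ≠ π c := π.injective.ne (ne_of_lt (h1.trans h2))
    have ha := (π a).is_lt
    have hb := (π b).is_lt
    have hc := (π c).is_lt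
    simp only [Fin.lt_iff_val_lt_val, Fin.val_rev, Fin.ext_iff, ne_eq] at *
    omega

theorem gep_cast_choose_three (n : ℕ) (hn : 1 ≤ n) :
    (n.choose 3 : ℚ) = (n : ℚ) * ((n : ℚ) - 1) * ((n : ℚ) - 2) / 6 := by
  rcases Nat.lt_or_ge n 3 with h | h
  · interval_cases n <;> norm_num [Nat.choose]
  · have hd : n.descFactorial 3 = 6 * n.choose 3 := by
      rw [Nat.descFactorial_eq_factorial_mul_choose]
      norm_num [Nat.factorial]
    have hd2 : n.descFactorial 3 = (n - 2) * ((n - 1) * n) := by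
      simp [Nat.descFactorial]
    have key : (6 : ℚ) * n.choose 3 = (n : ℚ) * ((n : ℚ) - 1) * ((n : ℚ) - 2) := by
      have : ((6 * n.choose 3 : ℕ) : ℚ) = (((n - 2) * ((n - 1) * n) : ℕ) : ℚ) := by
        rw [← hd, hd2]
      push_cast [Nat.cast_sub (by omega : 2 ≤ n), Nat.cast_sub (by omega : 1 ≤ n)] at this
      linarith
    linarith

theorem gep_perm_third_central_moment (n : ℕ) (hn : 1 ≤ n) :
    ∑ π : Equiv.Perm (Fin n),
        ((gep (fun i => π i) : ℚ) - (n : ℚ) * ((n : ℚ) - 1) * ((n : ℚ) - 2) / 12) ^ 3 = 0 := by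
  classical
  set μ : ℚ := (n : ℚ) * ((n : ℚ) - 1) * ((n : ℚ) - 2) / 12 with hμ
  set S : ℚ := ∑ π : Equiv.Perm (Fin n), ((gep (fun i => π i) : ℚ) - μ) ^ 3 with hS
  have hrev : S = ∑ π : Equiv.Perm (Fin n),
      ((gep (fun i => Fin.rev (π i)) : ℚ) - μ) ^ 3 := by
    rw [hS]
    apply Fintype.sum_equiv (Equiv.mulLeft (Fin.revPerm : Equiv.Perm (Fin n)))
    intro π
    have hfun : (fun i => (π : Fin n → Fin n) i)
        = (fun i => Fin.rev (((Equiv.mulLeft (Fin.revPerm : Equiv.Perm (Fin n))) π) i)) := by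
      funext i
      simp [Equiv.Perm.mul_apply, Fin.rev_rev]
    rw [hfun]
  have hterm : ∀ π : Equiv.Perm (Fin n),
      ((gep (fun i => Fin.rev (π i)) : ℚ) - μ) ^ 3 = -(((gep (fun i => π i) : ℚ) - μ) ^ 3) := by
    intro π
    have h1 : (gep (fun i => Fin.rev (π i)) : ℚ) = (n.choose 3 : ℚ) - gep (fun i => π i) := by
      have := gep_rev_add n π
      have : ((gep (fun i => Fin.rev (π i)) + gep (fun i => π i) : ℕ) : ℚ) = (n.choose 3 : ℚ) := by
        exact_mod_cast congrArg (Nat.cast : ℕ → ℚ) this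
      push_cast at this
      linarith
    rw [h1, gep_cast_choose_three n hn]
    rw [hμ]
    ring
  have hneg : S = -S := by
    conv_lhs => rw [hrev]
    rw [show (∑ π : Equiv.Perm (Fin n), ((gep (fun i => Fin.rev (π i)) : ℚ) - μ) ^ 3)
        = ∑ π : Equiv.Perm (Fin n), -(((gep (fun i => π i) : ℚ) - μ) ^ 3) from
      Finset.sum_congr rfl (fun π _ => hterm π)]
    rw [← Finset.sum_neg_distrib]
  have : S = 0 := by linarith
  exact this
end
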